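/- arXiv:2105.08538 — 8 statements merged into one kernel-verified Lean document; each statement's English description precedes it below -/
import Mathlib

section
/- If q(x,y,t) = p(x+my-ct)·exp(i(κx+ωy-rt+θ)) with p a twice differentiable real function and p' not identically zero solves i q_t + a q_{xy} + i b q (q q̄_x - q̄ q_x) = 0, then c = amκ + aω and p satisfies am p'' + (r - aκω) p + 2κb p³ = 0. -/
/-!
Every partial derivative of a plane wave `F (x + m y - c t) · exp (i (κ x + ω y - r t + θ))` is
again a plane wave with the same phase and a new profile, and since the phase has modulus one the
nonlinear term `q (q q̄ₓ - q̄ qₓ)` of a real profile `p` collapses to `-2 i κ p³` times the phase.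
So the equation says `R + i J = 0` for the real functions `R = a m p'' + (r - a κ ω) p + 2 κ b p³`
and `J = (a m κ + a ω - c) p'`; `J = 0` at a point where `p' ≠ 0` determines `c`.
-/

open Complex ComplexConjugate

theorem HasDerivAt.mul_cexp_I_mul_ofReal {F : ℝ → ℂ} {g : ℝ → ℝ} {F' : ℂ} {g' s : ℝ}
    (hF : HasDerivAt F F' s) (hg : HasDerivAt g g' s) :
    HasDerivAt (fun s => F s * cexp (I * g s)) ((F' + I * g' * F s) * cexp (I * g s)) s :=
  (hF.mul (hg.ofReal_comp.const_mul I).cexp).congr_deriv (by ring)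

theorem hasDerivAt_of_eq_affine {f : ℝ → ℝ} (α β : ℝ) (hf : ∀ s, f s = α * s + β) (s : ℝ) :
    HasDerivAt f α s := by
  rw [funext hf]
  simpa using ((hasDerivAt_id s).const_mul α).add_const β

theorem cexp_I_mul_ofReal_mul_conj (φ : ℝ) : cexp (I * φ) * conj (cexp (I * φ)) = 1 := by
  rw [mul_conj, normSq_eq_norm_sq, norm_exp_I_mul_ofReal]
  norm_num

noncomputable def planeWave (F : ℝ → ℂ) (m c κ ω r θ x y t : ℝ) : ℂ :=
  F (x + m * y - c * t) * cexp (I * ((κ * x + ω * y - r * t + θ : ℝ) : ℂ))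

section PlaneWave

variable {F F' F'' : ℝ → ℂ} {m c κ ω r θ : ℝ}

theorem hasDerivAt_planeWave_x (hF : ∀ z, HasDerivAt F (F' z) z) (x y t : ℝ) :
    HasDerivAt (fun s => planeWave F m c κ ω r θ s y t)
      (planeWave (fun z => F' z + I * κ * F z) m c κ ω r θ x y t) x := by
  unfold planeWave
  refine (HasDerivAt.mul_cexp_I_mul_ofReal
    ((hF _).scomp x (hasDerivAt_of_eq_affine 1 (m * y - c * t) (fun s => by ring) x))
    (hasDerivAt_of_eq_affine κ (ω * y - r * t + θ) (fun s => by ring) x)).congr_deriv ?_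
  simp

theorem hasDerivAt_planeWave_y (hF : ∀ z, HasDerivAt F (F' z) z) (x y t : ℝ) :
    HasDerivAt (fun u => planeWave F m c κ ω r θ x u t)
      (planeWave (fun z => m * F' z + I * ω * F z) m c κ ω r θ x y t) y := by
  unfold planeWave
  refine (HasDerivAt.mul_cexp_I_mul_ofReal
    ((hF _).scomp y (hasDerivAt_of_eq_affine m (x - c * t) (fun s => by ring) y))
    (hasDerivAt_of_eq_affine ω (κ * x - r * t + θ) (fun s => by ring) y)).congr_deriv ?_
  simp

theorem hasDerivAt_planeWave_t (hF : ∀ z, HasDerivAt F (F' z) z) (x y t : ℝ) :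
    HasDerivAt (fun s => planeWave F m c κ ω r θ x y s)
      (planeWave (fun z => -c * F' z - I * r * F z) m c κ ω r θ x y t) t := by
  unfold planeWave
  refine (HasDerivAt.mul_cexp_I_mul_ofReal
    ((hF _).scomp t (hasDerivAt_of_eq_affine (-c) (x + m * y) (fun s => by ring) t))
    (hasDerivAt_of_eq_affine (-r) (κ * x + ω * y + θ) (fun s => by ring) t)).congr_deriv ?_
  simp
  ring

theorem deriv_deriv_planeWave_y_x (hF : ∀ z, HasDerivAt F (F' z) z)
    (hF' : ∀ z, HasDerivAt F' (F'' z) z) (x y t : ℝ) :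
    deriv (fun s => deriv (fun u => planeWave F m c κ ω r θ s u t) y) x =
      planeWave (fun z => m * F'' z + I * (ω + m * κ) * F' z - κ * ω * F z) m c κ ω r θ x y t := by
  have hy : (fun s => deriv (fun u => planeWave F m c κ ω r θ s u t) y) =
      fun s => planeWave (fun z => m * F' z + I * ω * F z) m c κ ω r θ s y t :=
    funext fun s => (hasDerivAt_planeWave_y hF s y t).deriv
  have hG (z : ℝ) : HasDerivAt (fun z => m * F' z + I * ω * F z) (m * F'' z + I * ω * F' z) z :=
    ((hF' z).const_mul _).add ((hF z).const_mul _)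
  rw [hy, (hasDerivAt_planeWave_x hG x y t).deriv]
  unfold planeWave
  linear_combination
    (κ * ω * F (x + m * y - c * t) * cexp (I * ((κ * x + ω * y - r * t + θ : ℝ) : ℂ))) * I_sq

end PlaneWave

noncomputable def pdeResidual (a b : ℝ) (q : ℝ → ℝ → ℝ → ℂ) (x y t : ℝ) : ℂ :=
  I * deriv (fun s => q x y s) t
    + a * deriv (fun s => deriv (fun u => q s u t) y) x
    + I * b * q x y t *
      (q x y t * conj (deriv (fun s => q s y t) x) - conj (q x y t) * deriv (fun s => q s y t) x)

theorem pdeResidual_planeWave_ofReal {p p' p'' : ℝ → ℝ} (hp : ∀ z, HasDerivAt p (p' z) z)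
    (hp' : ∀ z, HasDerivAt p' (p'' z) z) (a b m c κ ω r θ x y t : ℝ) :
    pdeResidual a b (planeWave (fun z => p z) m c κ ω r θ) x y t =
      planeWave (fun z => ((a * m * p'' z + (r - a * κ * ω) * p z + 2 * κ * b * p z ^ 3 : ℝ) : ℂ)
        + (((a * m * κ + a * ω - c) * p' z : ℝ) : ℂ) * I) m c κ ω r θ x y t := by
  have hP (z : ℝ) : HasDerivAt (fun z => (p z : ℂ)) (p' z) z := (hp z).ofReal_comp
  have hP' (z : ℝ) : HasDerivAt (fun z => (p' z : ℂ)) (p'' z) z := (hp' z).ofReal_comp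
  have hE := cexp_I_mul_ofReal_mul_conj (κ * x + ω * y - r * t + θ)
  unfold pdeResidual
  rw [(hasDerivAt_planeWave_t hP x y t).deriv, deriv_deriv_planeWave_y_x hP hP',
    (hasDerivAt_planeWave_x hP x y t).deriv]
  unfold planeWave
  set E := cexp (I * ((κ * x + ω * y - r * t + θ : ℝ) : ℂ))
  set P := p (x + m * y - c * t)
  simp only [map_mul, map_add, conj_ofReal, conj_I]
  push_cast
  linear_combination
    (-2 * I ^ 2 * P ^ 3 * E * κ * b) * hE + (-(r * P * E) - 2 * P ^ 3 * E * κ * b) * I_sq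

theorem stmt_0_general (a b m c κ ω r θ : ℝ)
    (p : ℝ → ℝ) (hp : ContDiff ℝ 2 p) (hp' : ∃ ξ, deriv p ξ ≠ 0)
    (q : ℝ → ℝ → ℝ → ℂ)
    (hq : ∀ x y t, q x y t =
      (p (x + m * y - c * t) : ℂ) *
        Complex.exp (Complex.I * ((κ * x + ω * y - r * t + θ : ℝ) : ℂ)))
    (hpde : ∀ x y t,
      Complex.I * deriv (fun s => q x y s) t
        + (a : ℂ) * deriv (fun s => deriv (fun u => q s u t) y) x
        + Complex.I * (b : ℂ) * q x y t *
          (q x y t * (starRingEnd ℂ) (deriv (fun s => q s y t) x)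
            - (starRingEnd ℂ) (q x y t) * deriv (fun s => q s y t) x) = 0) :
    c = a * m * κ + a * ω ∧
      ∀ ξ, a * m * deriv (deriv p) ξ + (r - a * κ * ω) * p ξ + 2 * κ * b * (p ξ) ^ 3 = 0 := by
  obtain rfl : q = planeWave (fun z => p z) m c κ ω r θ :=
    funext fun x => funext fun y => funext (hq x y)
  have hode (ξ : ℝ) : a * m * deriv (deriv p) ξ + (r - a * κ * ω) * p ξ + 2 * κ * b * p ξ ^ 3 = 0
      ∧ (a * m * κ + a * ω - c) * deriv p ξ = 0 := by
    have h : pdeResidual a b (planeWave (fun z => p z) m c κ ω r θ) ξ 0 0 = 0 := hpde ξ 0 0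
    rw [pdeResidual_planeWave_ofReal (fun z => (hp.differentiable two_ne_zero z).hasDerivAt)
      (fun z => (hp.differentiable_deriv_two z).hasDerivAt), planeWave, mul_eq_zero,
      or_iff_left (exp_ne_zero _)] at h
    simp only [mul_zero, add_zero, sub_zero] at h
    rw [← mk_eq_add_mul_I, Complex.ext_iff] at h
    exact h
  obtain ⟨ξ₀, hξ₀⟩ := hp'
  refine ⟨?_, fun ξ => (hode ξ).1⟩
  linarith [(mul_eq_zero.mp (hode ξ₀).2).resolve_right hξ₀]

theorem stmt_0 (a b m c κ ω r θ : ℝ) (ha : a ≠ 0) (hm : m ≠ 0)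
    (p : ℝ → ℝ) (hp : ContDiff ℝ 2 p) (hp' : ∃ ξ, deriv p ξ ≠ 0)
    (q : ℝ → ℝ → ℝ → ℂ)
    (hq : ∀ x y t, q x y t =
      (p (x + m * y - c * t) : ℂ) *
        Complex.exp (Complex.I * ((κ * x + ω * y - r * t + θ : ℝ) : ℂ)))
    (hpde : ∀ x y t,
      Complex.I * deriv (fun s => q x y s) t
        + (a : ℂ) * deriv (fun s => deriv (fun u => q s u t) y) x
        + Complex.I * (b : ℂ) * q x y t *
          (q x y t * (starRingEnd ℂ) (deriv (fun s => q s y t) x)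
            - (starRingEnd ℂ) (q x y t) * deriv (fun s => q s y t) x) = 0) :
    c = a * m * κ + a * ω ∧
      ∀ ξ, a * m * deriv (deriv p) ξ + (r - a * κ * ω) * p ξ + 2 * κ * b * (p ξ) ^ 3 = 0 :=
  stmt_0_general a b m c κ ω r θ p hp hp' q hq hpde
end

section
/- Let α = κb/(am) < 0 and let p₅ = -√((aκω-r)/(2κb)), p₆ = √((aκω-r)/(2κb)) with κb(aκω-r) > 0. Then p(ξ) = ((p₆-p₅)/2)·tanh(((p₆-p₅)/2)·√(-α)·ξ) satisfies the ODE am p'' + (r - aκω)p + 2κb p³ = 0 for all ξ ∈ ℝ. -/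
/-!
Since `tanh' = 1 - tanh²`, the function `u ξ = s * tanh (k * ξ)` has
`u'' = -2 s k² tanh (k ξ) (1 - tanh² (k ξ))`, so it solves `A u'' + B u + 2 C u³ = 0` as soon as
`A k² = -C s²` and `B = -2 C s²`. With `s = (p₆ - p₅) / 2 = √((aκω - r) / (2κb))` and
`k = s √(-α)` both relations hold for `A = am`, `B = r - aκω`, `C = κb`.
-/

open Real

theorem Real.hasDerivAt_tanh (x : ℝ) : HasDerivAt tanh (1 - tanh x ^ 2) x := by
  have hcosh : cosh x ≠ 0 := (cosh_pos x).ne'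
  have hderiv : (cosh x * cosh x - sinh x * sinh x) / cosh x ^ 2 = 1 - tanh x ^ 2 := by
    rw [tanh_eq_sinh_div_cosh]
    field_simp
  rw [← hderiv, show tanh = sinh / cosh from funext tanh_eq_sinh_div_cosh]
  exact (hasDerivAt_sinh x).div (hasDerivAt_cosh x) hcosh

theorem hasDerivAt_tanh_mul (k x : ℝ) :
    HasDerivAt (fun y => tanh (k * y)) (k * (1 - tanh (k * x) ^ 2)) x :=
  ((hasDerivAt_tanh (k * x)).comp x ((hasDerivAt_id x).const_mul k)).congr_deriv (by ring)

theorem deriv_deriv_const_mul_tanh_mul (s k x : ℝ) :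
    deriv (deriv fun y => s * tanh (k * y)) x
      = -2 * s * k ^ 2 * tanh (k * x) * (1 - tanh (k * x) ^ 2) := by
  have hderiv : deriv (fun y => s * tanh (k * y)) = fun y => s * (k * (1 - tanh (k * y) ^ 2)) :=
    funext fun y => ((hasDerivAt_tanh_mul k y).const_mul s).deriv
  rw [hderiv, ((((hasDerivAt_tanh_mul k x).fun_pow 2).const_sub 1).const_mul k
    |>.const_mul s).deriv]
  ring

theorem const_mul_tanh_mul_solves_cubic {A B C s k : ℝ} (hA : A * k ^ 2 = -(C * s ^ 2))
    (hB : B = -(2 * C * s ^ 2)) (x : ℝ) :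
    A * deriv (deriv fun y => s * tanh (k * y)) x + B * (s * tanh (k * x))
      + 2 * C * (s * tanh (k * x)) ^ 3 = 0 := by
  rw [deriv_deriv_const_mul_tanh_mul, hB]
  linear_combination (-2 * s * tanh (k * x) * (1 - tanh (k * x) ^ 2)) * hA

theorem stmt_4_general (a m κ ω r b : ℝ)
    (hpos : κ * b * (a * κ * ω - r) > 0) (hneg : κ * b / (a * m) < 0)
    (p₅ p₆ : ℝ) (hp₅ : p₅ = -Real.sqrt ((a * κ * ω - r) / (2 * κ * b)))
    (hp₆ : p₆ = Real.sqrt ((a * κ * ω - r) / (2 * κ * b)))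
    (p : ℝ → ℝ)
    (hp : ∀ ξ, p ξ = ((p₆ - p₅) / 2) *
      Real.tanh (((p₆ - p₅) / 2) * Real.sqrt (-(κ * b / (a * m))) * ξ)) :
    ∀ ξ, a * m * deriv (deriv p) ξ + (r - a * κ * ω) * p ξ
      + 2 * κ * b * (p ξ) ^ 3 = 0 := by
  have ham : a * m ≠ 0 := by rintro h; simp [h] at hneg
  have hκb : κ * b ≠ 0 := by rintro h; simp [h] at hneg
  obtain ⟨ha, hm⟩ := mul_ne_zero_iff.mp ham
  obtain ⟨hκ, hb⟩ := mul_ne_zero_iff.mp hκb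
  set s := (p₆ - p₅) / 2
  set k := s * √(-(κ * b / (a * m)))
  have hs : s ^ 2 = (a * κ * ω - r) / (2 * κ * b) := by
    have hnonneg : 0 ≤ (a * κ * ω - r) / (2 * κ * b) := by
      rw [show (a * κ * ω - r) / (2 * κ * b) = κ * b * (a * κ * ω - r) / (2 * (κ * b) ^ 2) by
        field_simp]
      positivity
    rw [show s = √((a * κ * ω - r) / (2 * κ * b)) by simp only [s, hp₅, hp₆]; ring,
      sq_sqrt hnonneg]
  have hA : a * m * k ^ 2 = -(κ * b * s ^ 2) := by
    rw [mul_pow, sq_sqrt (by linarith)]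
    field_simp
  have hB : r - a * κ * ω = -(2 * (κ * b) * s ^ 2) := by
    rw [hs]
    field_simp
    ring
  intro ξ
  rw [show p = fun y => s * tanh (k * y) from funext hp]
  simpa only [mul_assoc] using const_mul_tanh_mul_solves_cubic hA hB ξ

theorem stmt_4 (a m κ ω r b : ℝ) (ham : a * m ≠ 0)
    (hpos : κ * b * (a * κ * ω - r) > 0) (hneg : κ * b / (a * m) < 0)
    (p₅ p₆ : ℝ) (hp₅ : p₅ = -Real.sqrt ((a * κ * ω - r) / (2 * κ * b)))
    (hp₆ : p₆ = Real.sqrt ((a * κ * ω - r) / (2 * κ * b)))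
    (p : ℝ → ℝ)
    (hp : ∀ ξ, p ξ = ((p₆ - p₅) / 2) *
      Real.tanh (((p₆ - p₅) / 2) * Real.sqrt (-(κ * b / (a * m))) * ξ)) :
    ∀ ξ, a * m * deriv (deriv p) ξ + (r - a * κ * ω) * p ξ
      + 2 * κ * b * (p ξ) ^ 3 = 0 :=
  stmt_4_general a m κ ω r b hpos hneg p₅ p₆ hp₅ hp₆ p hp
end

section
/- Let β = (a κ ω - r)/(2κb) > 0 and γ = (r - aκω)/(am) with κb/(am) < 0. Then p(ξ) = √β·(1 + 2/(exp(√(2γ)·ξ) - 1)) = √β·coth((√(2γ)/2)·ξ) satisfies am p'' + (r - aκω)p + 2κb p³ = 0 on (0, ∞). -/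
/-!
With `s = √(2γ)`, the function `g ξ = 1 + 2 / (exp (s ξ) - 1) = coth (s ξ / 2)` satisfies the Riccati
equation `g' = (s / 2) (1 - g²)`, hence `g'' = (s² / 2) g (g² - 1)`. For `p = √β g` the equation then
reduces to the two coefficient identities `a m s² / 2 = r - a κ ω` and `2 κ b β = a κ ω - r`, which hold
by the definitions of `γ` and `β`; the sign conditions make `β` and `γ` positive, so that both square
roots are honest.
-/

open Real Filter Topology

noncomputable section

/-- `expCoth s x = coth (s * x / 2)`, written through `exp` as in the paper. -/
def expCoth (s x : ℝ) : ℝ := 1 + 2 / (exp (s * x) - 1)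

lemma exp_mul_sub_one_ne_zero {s x : ℝ} (h : s * x ≠ 0) : exp (s * x) - 1 ≠ 0 :=
  sub_ne_zero.mpr fun he => h (exp_eq_one_iff _ |>.mp he)

lemma hasDerivAt_expCoth {s x : ℝ} (h : s * x ≠ 0) :
    HasDerivAt (expCoth s) (s / 2 * (1 - expCoth s x ^ 2)) x := by
  have hexp : HasDerivAt (fun y => exp (s * y)) (exp (s * x) * s) x :=
    ((hasDerivAt_id x).const_mul s).exp.congr_deriv (by simp)
  have hne := exp_mul_sub_one_ne_zero h
  refine (((hasDerivAt_const x (2 : ℝ)).div (hexp.sub_const 1) hne).const_add 1).congr_deriv ?_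
  unfold expCoth
  field_simp
  ring

lemma deriv_expCoth_eventuallyEq {s x : ℝ} (h : s * x ≠ 0) :
    deriv (expCoth s) =ᶠ[𝓝 x] fun y => s / 2 * (1 - expCoth s y ^ 2) := by
  have hopen : IsOpen {y : ℝ | s * y ≠ 0} :=
    isOpen_ne_fun (continuous_const.mul continuous_id) continuous_const
  filter_upwards [hopen.mem_nhds h] with y hy using (hasDerivAt_expCoth hy).deriv

lemma deriv_deriv_expCoth {s x : ℝ} (h : s * x ≠ 0) :
    deriv (deriv (expCoth s)) x = s ^ 2 / 2 * expCoth s x * (expCoth s x ^ 2 - 1) := by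
  rw [(deriv_expCoth_eventuallyEq h).deriv_eq]
  refine ((((hasDerivAt_expCoth h).pow 2).const_sub 1).const_mul (s / 2)).deriv.trans ?_
  ring

lemma expCoth_cubic_ode {A C D c s x : ℝ} (hs : A * s ^ 2 = 2 * C) (hc : D * c ^ 2 = -C)
    (hx : s * x ≠ 0) :
    A * deriv (deriv fun y => c * expCoth s y) x + C * (c * expCoth s x)
      + D * (c * expCoth s x) ^ 3 = 0 := by
  simp only [deriv_const_mul_field', deriv_deriv_expCoth hx]
  linear_combination (c * expCoth s x * (expCoth s x ^ 2 - 1) / 2) * hs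
    + (c * expCoth s x ^ 3) * hc

theorem stmt_7 (a m κ ω r b : ℝ) (ham : a * m ≠ 0)
    (hpos : κ * b * (a * κ * ω - r) > 0) (hneg : κ * b / (a * m) < 0)
    (β γ : ℝ) (hβ : β = (a * κ * ω - r) / (2 * κ * b))
    (hγ : γ = (r - a * κ * ω) / (a * m))
    (p : ℝ → ℝ)
    (hp : ∀ ξ, p ξ = Real.sqrt β *
      (1 + 2 / (Real.exp (Real.sqrt (2 * γ) * ξ) - 1))) :
    ∀ ξ : ℝ, 0 < ξ →
      a * m * deriv (deriv p) ξ + (r - a * κ * ω) * p ξ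
        + 2 * κ * b * (p ξ) ^ 3 = 0 := by
  intro ξ hξ
  obtain ⟨hκ, hb⟩ : κ ≠ 0 ∧ b ≠ 0 := mul_ne_zero_iff.mp (by rintro h; simp [h] at hpos)
  obtain ⟨ha, hm⟩ : a ≠ 0 ∧ m ≠ 0 := mul_ne_zero_iff.mp ham
  have hβ_pos : 0 < β := by
    have : β = κ * b * (a * κ * ω - r) / (2 * (κ * b) ^ 2) := by rw [hβ]; field_simp
    rw [this]; positivity
  have hγ_pos : 0 < γ := by
    have : γ = κ * b * (a * κ * ω - r) * -(κ * b / (a * m)) / (κ * b) ^ 2 := by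
      rw [hγ]; field_simp; ring
    rw [this]; exact div_pos (mul_pos hpos (neg_pos.mpr hneg)) (by positivity)
  have hp_eq : p = fun y => √β * expCoth √(2 * γ) y := funext hp
  rw [hp_eq]
  refine expCoth_cubic_ode ?_ ?_ (by positivity)
  · rw [sq_sqrt (by positivity), hγ]; field_simp
  · rw [sq_sqrt hβ_pos.le, hβ]; field_simp; ring
end
end

section
/- Let μ = p₅' √(-κb/(am)) with p₅' > 0 and 2κb p₅'² = 2(aκω - r), i.e. p₅' = √((aκω-r)/(κb)). Then p(ξ) = p₅'·csc(μξ) satisfies am p'' + (r - aκω)p + 2κb p³ = 0 on (0, π/μ). -/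
/-!
The function `c / sin (μ x)` satisfies `y'' = c μ² (2 - sin² (μ x)) / sin³ (μ x)`, i.e.
`y'' = -μ² y + (2 μ² / c²) y³`. The choice of `p₅'` and `μ` makes
`a m μ² = r - a κ ω` and `κ b p₅'² = a κ ω - r`, and these two relations make both the linear
and the cubic terms of the equation cancel.
-/

open Real Topology

lemma hasDerivAt_div_sin_mul (c μ x : ℝ) (hx : sin (μ * x) ≠ 0) :
    HasDerivAt (fun x => c / sin (μ * x)) (-(c * μ) * cos (μ * x) / sin (μ * x) ^ 2) x := by
  have hsin : HasDerivAt (fun x => sin (μ * x)) (cos (μ * x) * μ) x := by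
    simpa using ((hasDerivAt_id x).const_mul μ).sin
  exact ((hasDerivAt_const x c).fun_div hsin hx).congr_deriv (by ring)

lemma hasDerivAt_cos_mul_div_sin_mul_sq (k μ x : ℝ) (hx : sin (μ * x) ≠ 0) :
    HasDerivAt (fun x => k * cos (μ * x) / sin (μ * x) ^ 2)
      (-(k * μ) * (sin (μ * x) ^ 2 + 2 * cos (μ * x) ^ 2) / sin (μ * x) ^ 3) x := by
  have hcos : HasDerivAt (fun x => k * cos (μ * x)) (k * (-sin (μ * x) * μ)) x := by
    simpa using (((hasDerivAt_id x).const_mul μ).cos).const_mul k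
  have hsin2 : HasDerivAt (fun x => sin (μ * x) ^ 2) (2 * sin (μ * x) * (cos (μ * x) * μ)) x := by
    simpa using (((hasDerivAt_id x).const_mul μ).sin).fun_pow 2
  refine (hcos.fun_div hsin2 (pow_ne_zero 2 hx)).congr_deriv ?_
  field_simp
  ring

lemma deriv_deriv_div_sin_mul (c μ x : ℝ) (hx : sin (μ * x) ≠ 0) :
    deriv (deriv fun x => c / sin (μ * x)) x
      = c * μ ^ 2 * (2 - sin (μ * x) ^ 2) / sin (μ * x) ^ 3 := by
  have hderiv : deriv (fun x => c / sin (μ * x))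
      =ᶠ[𝓝 x] fun x => -(c * μ) * cos (μ * x) / sin (μ * x) ^ 2 := by
    have hopen : IsOpen {x : ℝ | sin (μ * x) ≠ 0} :=
      isOpen_ne.preimage (by fun_prop)
    filter_upwards [hopen.mem_nhds hx] with y hy
    exact (hasDerivAt_div_sin_mul c μ y hy).deriv
  rw [hderiv.deriv_eq, (hasDerivAt_cos_mul_div_sin_mul_sq _ μ x hx).deriv]
  field_simp
  linear_combination 2 * c * μ ^ 2 * sin_sq_add_cos_sq (μ * x)

lemma sin_mul_pos_of_pos_of_lt_pi_div {μ ξ : ℝ} (hξ : 0 < ξ) (hξπ : ξ < π / μ) :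
    0 < sin (μ * ξ) := by
  have hμ : 0 < μ := by
    by_contra! hμ
    exact (div_nonpos_of_nonneg_of_nonpos pi_pos.le hμ).not_gt (hξ.trans hξπ)
  apply sin_pos_of_pos_of_lt_pi (by positivity)
  calc μ * ξ < μ * (π / μ) := by gcongr
    _ = π := by field_simp

theorem stmt_8 (a m κ ω r b : ℝ) (ham : a * m ≠ 0)
    (hpos : κ * b * (a * κ * ω - r) > 0) (hneg : κ * b / (a * m) < 0)
    (p₅' μ : ℝ) (hp₅' : p₅' = Real.sqrt ((a * κ * ω - r) / (κ * b)))
    (hμ : μ = p₅' * Real.sqrt (-(κ * b / (a * m))))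
    (p : ℝ → ℝ) (hp : ∀ ξ, p ξ = p₅' / Real.sin (μ * ξ)) :
    ∀ ξ : ℝ, 0 < ξ → ξ < Real.pi / μ →
      a * m * deriv (deriv p) ξ + (r - a * κ * ω) * p ξ
        + 2 * κ * b * (p ξ) ^ 3 = 0 := by
  have hkb : κ * b ≠ 0 := by
    intro h
    simp [h] at hpos
  have hp₅'_sq : κ * b * p₅' ^ 2 = a * κ * ω - r := by
    have hquot : 0 < (a * κ * ω - r) / (κ * b) := by
      rw [← mul_div_mul_left _ _ hkb]
      exact div_pos hpos (mul_self_pos.mpr hkb)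
    rw [hp₅', sq_sqrt hquot.le, mul_div_cancel₀ _ hkb]
  have hμ_sq : a * m * μ ^ 2 = r - a * κ * ω := by
    rw [hμ, mul_pow, sq_sqrt (by linarith)]
    linear_combination -hp₅'_sq - p₅' ^ 2 * mul_div_cancel₀ (κ * b) ham
  intro ξ hξ hξπ
  have hsin := (sin_mul_pos_of_pos_of_lt_pi_div hξ hξπ).ne'
  rw [show p = fun ξ => p₅' / sin (μ * ξ) from funext hp, deriv_deriv_div_sin_mul _ _ _ hsin]
  field_simp
  linear_combination p₅' * (2 - sin (μ * ξ) ^ 2) * hμ_sq + 2 * p₅' * hp₅'_sq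
end

section
/- If q(x,y,t) = φ(ξ)·exp(i(φ̂(ξ) - μt)) with ξ = x + my - ct solves i q_t + a q_{xy} + i b q(q q̄_x - q̄ q_x) = 0, where φ is twice differentiable, nowhere zero, and φ̂ is differentiable, then the imaginary-part equation -c φ' + 2am φ' φ̂' + am φ φ̂'' = 0 holds, and consequently there is a constant e such that φ̂'(ξ) = e/(am φ(ξ)²) + c/(2am) for all ξ. -/
/-!
With `ξ = x + m y - c t`, the ansatz reads `q = F(ξ) e^{-iμt}` for the complex profile
`F = φ e^{iφ̂}`, so every partial derivative of `q` is a derivative of `F` along `ξ`, and at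
`(x, y, t) = (ξ, 0, 0)` the equation becomes a relation between `F(ξ)`, `F'(ξ)` and `F''(ξ)`.
Because `|e^{iφ̂}| = 1`, the cubic term is the real multiple `2bφ³φ̂'` of `e^{iφ̂}`; dividing by
`e^{iφ̂}` and taking imaginary parts gives `-cφ' + am(2φ'φ̂' + φφ̂'') = 0`. Multiplied by `φ`, this
says `amφ²φ̂' - cφ²/2` is constant, which is the formula for `φ̂'`.
-/

open Complex ComplexConjugate

theorem HasDerivAt.mul_cexp_ofReal_mul_I {f : ℝ → ℂ} {g : ℝ → ℝ} {f' : ℂ} {g' x : ℝ}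
    (hf : HasDerivAt f f' x) (hg : HasDerivAt g g' x) :
    HasDerivAt (fun x => f x * cexp (g x * I)) ((f' + g' * I * f x) * cexp (g x * I)) x :=
  (hf.mul (hg.ofReal_comp.mul_const I).cexp).congr_deriv (by ring)

theorem conj_mul_cexp_ofReal_mul_I (θ : ℝ) : conj (cexp (θ * I)) * cexp (θ * I) = 1 := by
  rw [conj_mul', norm_exp_ofReal_mul_I, ofReal_one, one_pow]

noncomputable def waveProfile (φ ψ : ℝ → ℝ) (ξ : ℝ) : ℂ := φ ξ * cexp (ψ ξ * I)

section WaveProfile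

variable {φ ψ : ℝ → ℝ}

theorem hasDerivAt_waveProfile {φ' ψ' ξ : ℝ} (hφ : HasDerivAt φ φ' ξ) (hψ : HasDerivAt ψ ψ' ξ) :
    HasDerivAt (waveProfile φ ψ) ((φ' + ψ' * I * φ ξ) * cexp (ψ ξ * I)) ξ :=
  hφ.ofReal_comp.mul_cexp_ofReal_mul_I hψ

theorem deriv_waveProfile (hφ : Differentiable ℝ φ) (hψ : Differentiable ℝ ψ) :
    deriv (waveProfile φ ψ)
      = fun ξ => (deriv φ ξ + deriv ψ ξ * I * φ ξ) * cexp (ψ ξ * I) :=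
  funext fun ξ => (hasDerivAt_waveProfile (hφ ξ).hasDerivAt (hψ ξ).hasDerivAt).deriv

theorem hasDerivAt_deriv_waveProfile (hφ : ContDiff ℝ 2 φ) (hψ : ContDiff ℝ 2 ψ) (ξ : ℝ) :
    HasDerivAt (deriv (waveProfile φ ψ))
      ((deriv (deriv φ) ξ - deriv ψ ξ ^ 2 * φ ξ
        + (2 * deriv ψ ξ * deriv φ ξ + deriv (deriv ψ) ξ * φ ξ) * I) * cexp (ψ ξ * I)) ξ := by
  have hφ₁ := hφ.differentiable two_ne_zero
  have hψ₁ := hψ.differentiable two_ne_zero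
  rw [deriv_waveProfile hφ₁ hψ₁]
  have hφ' := (hφ.differentiable_deriv_two ξ).hasDerivAt.ofReal_comp
  have hψ' := (hψ.differentiable_deriv_two ξ).hasDerivAt.ofReal_comp
  refine ((hφ'.add ((hψ'.mul_const I).mul (hφ₁ ξ).hasDerivAt.ofReal_comp)).mul_cexp_ofReal_mul_I
    (hψ₁ ξ).hasDerivAt).congr_deriv ?_
  simp only [Pi.add_apply, Pi.mul_apply]
  linear_combination (deriv ψ ξ ^ 2 * φ ξ * cexp (ψ ξ * I) : ℂ) * I_mul_I

theorem differentiable_waveProfile (hφ : Differentiable ℝ φ) (hψ : Differentiable ℝ ψ) :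
    Differentiable ℝ (waveProfile φ ψ) :=
  fun ξ => (hasDerivAt_waveProfile (hφ ξ).hasDerivAt (hψ ξ).hasDerivAt).differentiableAt

end WaveProfile

section TravelingWave

variable (F : ℝ → ℂ) (m c μ : ℝ)

noncomputable def travelingWave (x y t : ℝ) : ℂ := F (x + m * y - c * t) * cexp (-I * μ * t)

variable {F}

theorem deriv_travelingWave_x (hF : Differentiable ℝ F) (x y t : ℝ) :
    deriv (fun s => travelingWave F m c μ s y t) x
      = deriv F (x + m * y - c * t) * cexp (-I * μ * t) := by
  have hξ : HasDerivAt (fun s => s + m * y - c * t) 1 x :=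
    ((hasDerivAt_id x).add_const _).sub_const _
  exact (((hF _).hasDerivAt.scomp x hξ).mul_const _).deriv.trans (by rw [one_smul])

theorem deriv_travelingWave_y (hF : Differentiable ℝ F) (x y t : ℝ) :
    deriv (fun u => travelingWave F m c μ x u t) y
      = m * deriv F (x + m * y - c * t) * cexp (-I * μ * t) := by
  have hξ : HasDerivAt (fun u => x + m * u - c * t) m y := by
    simpa using (((hasDerivAt_id y).const_mul m).const_add x).sub_const (c * t)
  exact (((hF _).hasDerivAt.scomp y hξ).mul_const _).deriv.trans (by rw [real_smul])

theorem deriv_travelingWave_t (hF : Differentiable ℝ F) (x y t : ℝ) :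
    deriv (fun s => travelingWave F m c μ x y s) t
      = (-c * deriv F (x + m * y - c * t) - μ * I * F (x + m * y - c * t))
          * cexp (-I * μ * t) := by
  have hξ : HasDerivAt (fun s => x + m * y - c * s) (-c) t := by
    simpa using ((hasDerivAt_id t).const_mul c).const_sub (x + m * y)
  have hE : HasDerivAt (fun s : ℝ => cexp (-I * μ * s)) (cexp (-I * μ * t) * (-I * μ)) t := by
    simpa using ((hasDerivAt_id t).ofReal_comp.const_mul (-I * μ)).cexp
  refine (((hF _).hasDerivAt.scomp t hξ).mul hE).deriv.trans ?_
  simp only [neg_smul, real_smul, neg_mul, Function.comp_apply, mul_neg]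
  ring

theorem deriv_travelingWave_xy (hF : Differentiable ℝ F) (hF' : Differentiable ℝ (deriv F))
    (x y t : ℝ) :
    deriv (fun s => deriv (fun u => travelingWave F m c μ s u t) y) x
      = m * deriv (deriv F) (x + m * y - c * t) * cexp (-I * μ * t) := by
  have h : (fun s => deriv (fun u => travelingWave F m c μ s u t) y)
      = fun s => travelingWave (fun ξ => m * deriv F ξ) m c μ s y t := by
    funext s
    rw [deriv_travelingWave_y m c μ hF, travelingWave]
  rw [h, deriv_travelingWave_x m c μ (hF'.const_mul _), deriv_const_mul _ (hF' _)]

end TravelingWave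

theorem phase_relation_of_profile_equation {P F₀ F₁ F₂ : ℂ} (hP : conj P * P = 1)
    {a b m c μ φ φ' φ'' ψ' ψ'' : ℝ} (hF₀ : F₀ = φ * P) (hF₁ : F₁ = (φ' + ψ' * I * φ) * P)
    (hF₂ : F₂ = (φ'' - ψ' ^ 2 * φ + (2 * ψ' * φ' + ψ'' * φ) * I) * P)
    (h : I * (-c * F₁ - μ * I * F₀) + a * (m * F₂)
      + I * b * F₀ * (F₀ * conj F₁ - conj F₀ * F₁) = 0) :
    -c * φ' + 2 * a * m * φ' * ψ' + a * m * φ * ψ'' = 0 := by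
  subst hF₀ hF₁ hF₂
  simp only [map_mul, map_add, conj_ofReal, conj_I] at h
  have key : P * ((c * φ * ψ' + μ * φ + a * m * (φ'' - φ * ψ' ^ 2) + 2 * b * φ ^ 3 * ψ' : ℝ)
      + (-c * φ' + 2 * a * m * φ' * ψ' + a * m * φ * ψ'' : ℝ) * I) = 0 := by
    push_cast
    linear_combination h + (2 * b * φ ^ 3 * ψ' * I * I * P) * hP
      + ((c * φ * ψ' + μ * φ + 2 * b * φ ^ 3 * ψ') * P) * I_mul_I
  have hP0 : P ≠ 0 := by rintro rfl; simp at hP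
  have := congrArg im ((mul_eq_zero.mp key).resolve_left hP0)
  simpa only [add_im, ofReal_im, im_ofReal_mul, I_im, mul_one, zero_add, zero_im] using this

theorem exists_eq_div_sq_add_of_linear_ode {k c : ℝ} (hk : k ≠ 0) {φ g : ℝ → ℝ}
    (hφ : Differentiable ℝ φ) (hg : Differentiable ℝ g) (hφ0 : ∀ ξ, φ ξ ≠ 0)
    (h : ∀ ξ, -c * deriv φ ξ + 2 * k * deriv φ ξ * g ξ + k * φ ξ * deriv g ξ = 0) :
    ∃ e : ℝ, ∀ ξ, g ξ = e / (k * φ ξ ^ 2) + c / (2 * k) := by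
  set J : ℝ → ℝ := fun ξ => k * (φ ξ ^ 2 * g ξ) - c / 2 * φ ξ ^ 2
  have hJ : ∀ ξ, HasDerivAt J 0 ξ := fun ξ =>
    have hφξ := (hφ ξ).hasDerivAt
    ((((hφξ.pow 2).mul (hg ξ).hasDerivAt).const_mul k).sub
      ((hφξ.pow 2).const_mul (c / 2))).congr_deriv
        (by simp only [Pi.pow_apply]; linear_combination φ ξ * h ξ)
  refine ⟨J 0, fun ξ => ?_⟩
  have hconst : J ξ = J 0 :=
    is_const_of_deriv_eq_zero (fun x => (hJ x).differentiableAt) (fun x => (hJ x).deriv) ξ 0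
  have := hφ0 ξ
  field_simp
  linear_combination 2 * hconst

theorem stmt_9 (a b m c μ : ℝ) (ham : a * m ≠ 0)
    (φ φh : ℝ → ℝ) (hφ : ContDiff ℝ 2 φ) (hφ0 : ∀ ξ, φ ξ ≠ 0)
    (hφh : ContDiff ℝ 2 φh)
    (q : ℝ → ℝ → ℝ → ℂ)
    (hq : ∀ x y t, q x y t =
      (φ (x + m * y - c * t) : ℂ) *
        Complex.exp (Complex.I * ((φh (x + m * y - c * t) - μ * t : ℝ) : ℂ)))
    (hpde : ∀ x y t,
      Complex.I * deriv (fun s => q x y s) t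
        + (a : ℂ) * deriv (fun s => deriv (fun u => q s u t) y) x
        + Complex.I * (b : ℂ) * q x y t *
          (q x y t * (starRingEnd ℂ) (deriv (fun s => q s y t) x)
            - (starRingEnd ℂ) (q x y t) * deriv (fun s => q s y t) x) = 0) :
    (∀ ξ, -c * deriv φ ξ + 2 * a * m * deriv φ ξ * deriv φh ξ
        + a * m * φ ξ * deriv (deriv φh) ξ = 0) ∧
      ∃ e : ℝ, ∀ ξ, deriv φh ξ = e / (a * m * (φ ξ) ^ 2) + c / (2 * a * m) := by
  have hφ₁ := hφ.differentiable two_ne_zero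
  have hφh₁ := hφh.differentiable two_ne_zero
  have hF : Differentiable ℝ (waveProfile φ φh) := differentiable_waveProfile hφ₁ hφh₁
  have hF' : Differentiable ℝ (deriv (waveProfile φ φh)) :=
    fun ξ => (hasDerivAt_deriv_waveProfile hφ hφh ξ).differentiableAt
  have hqF : q = travelingWave (waveProfile φ φh) m c μ := by
    funext x y t
    rw [hq, travelingWave, waveProfile, mul_assoc, ← exp_add]
    congr 2
    push_cast
    ring
  have himag : ∀ ξ, -c * deriv φ ξ + 2 * a * m * deriv φ ξ * deriv φh ξ
      + a * m * φ ξ * deriv (deriv φh) ξ = 0 := by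
    intro ξ
    have h := hpde ξ 0 0
    rw [hqF, deriv_travelingWave_t m c μ hF, deriv_travelingWave_xy m c μ hF hF',
      deriv_travelingWave_x m c μ hF] at h
    simp only [travelingWave, mul_zero, add_zero, sub_zero, ofReal_zero, exp_zero, mul_one] at h
    exact phase_relation_of_profile_equation (conj_mul_cexp_ofReal_mul_I (φh ξ)) rfl
      (congrFun (deriv_waveProfile hφ₁ hφh₁) ξ) (hasDerivAt_deriv_waveProfile hφ hφh ξ).deriv h
  refine ⟨himag, ?_⟩
  obtain ⟨e, he⟩ := exists_eq_div_sq_add_of_linear_ode (c := c) ham hφ₁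
    hφh.differentiable_deriv_two hφ0 fun ξ => by linear_combination himag ξ
  exact ⟨e, fun ξ => by rw [he ξ]; ring⟩
end

section
/- Let α₁ > 0, α₂ < 0, and u₃ = √(-2α₂/(3α₁)). Then φ(ξ) = √(-2α₂/(3α₁) + 2/(α₁ξ²)) satisfies the ODE φ'' = (α₁φ⁶ + α₂φ⁴ + α₃)/φ³ on (0, ∞), where α₃ = -4α₂³/(27α₁²). -/
/-!
Put `c = -2α₂/(3α₁)` and `k = 2/α₁`, so that `φ ξ = √(c + k/ξ²)`. Differentiating twice gives
`φ'' = (3kc/ξ⁴ + 2k²/ξ⁶)/φ³`. On the other side, the choice of `α₃` makes the cubic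
`α₁u³ + α₂u² + α₃` factor as `α₁(u - c)²(u + c/2)`, and at `u = φ² = c + k/ξ²` this is
`α₁(k/ξ²)²(3c/2 + k/ξ²)`, which is the same numerator because `α₁k = 2`.
-/

open Real Filter Topology

section SqrtConstAddDivSq

variable {c k x : ℝ}

theorem hasDerivAt_sqrt_const_add_div_sq (hx : x ≠ 0) (hpos : 0 < c + k / x ^ 2) :
    HasDerivAt (fun y => √(c + k / y ^ 2)) (-k / (x ^ 3 * √(c + k / x ^ 2))) x := by
  have hinner : HasDerivAt (fun y => c + k / y ^ 2) (-2 * k / x ^ 3) x := by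
    refine (((hasDerivAt_const x k).fun_div (hasDerivAt_pow 2 x) (pow_ne_zero 2 hx)).const_add
      c).congr_deriv ?_
    field_simp
    ring
  convert hinner.sqrt hpos.ne' using 1
  field_simp

theorem deriv_deriv_sqrt_const_add_div_sq (hx : x ≠ 0) (hpos : 0 < c + k / x ^ 2) :
    deriv (deriv fun y => √(c + k / y ^ 2)) x =
      (3 * k * c / x ^ 4 + 2 * k ^ 2 / x ^ 6) / √(c + k / x ^ 2) ^ 3 := by
  set f : ℝ → ℝ := fun y => √(c + k / y ^ 2)
  have hcont : ContinuousAt (fun y => c + k / y ^ 2) x :=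
    continuousAt_const.add (continuousAt_const.div (continuousAt_id.pow 2) (pow_ne_zero 2 hx))
  have hderiv : deriv f =ᶠ[𝓝 x] fun y => -k / (y ^ 3 * f y) := by
    filter_upwards [continuousAt_const.eventually_lt hcont hpos, eventually_ne_nhds hx]
      with y hy hy0
    exact (hasDerivAt_sqrt_const_add_div_sq hy0 hy).deriv
  have hf : HasDerivAt f (-k / (x ^ 3 * f x)) x := hasDerivAt_sqrt_const_add_div_sq hx hpos
  have hfx : 0 < f x := sqrt_pos.mpr hpos
  have hfx_sq : f x ^ 2 = c + k / x ^ 2 := sq_sqrt hpos.le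
  have hden : HasDerivAt (fun y => y ^ 3 * f y)
      (3 * x ^ 2 * f x + x ^ 3 * (-k / (x ^ 3 * f x))) x := by
    simpa using (hasDerivAt_pow 3 x).fun_mul hf
  rw [hderiv.deriv_eq, ((hasDerivAt_const x (-k)).fun_div hden (by positivity)).deriv]
  change _ = _ / f x ^ 3
  field_simp
  rw [hfx_sq]
  field_simp
  ring

end SqrtConstAddDivSq

theorem cubic_eq_mul_sq_mul {a₁ a₂ a₃ c : ℝ} (ha₁ : a₁ ≠ 0) (hc : c = -2 * a₂ / (3 * a₁))
    (ha₃ : a₃ = -4 * a₂ ^ 3 / (27 * a₁ ^ 2)) (u : ℝ) :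
    a₁ * u ^ 3 + a₂ * u ^ 2 + a₃ = a₁ * (u - c) ^ 2 * (u + c / 2) := by
  subst hc ha₃
  field_simp
  ring

theorem stmt_16 (α₁ α₂ α₃ : ℝ) (h1 : α₁ > 0) (h2 : α₂ < 0)
    (h3 : α₃ = -4 * α₂ ^ 3 / (27 * α₁ ^ 2))
    (φ : ℝ → ℝ)
    (hφ : ∀ ξ, φ ξ = Real.sqrt (-2 * α₂ / (3 * α₁) + 2 / (α₁ * ξ ^ 2))) :
    ∀ ξ : ℝ, 0 < ξ →
      deriv (deriv φ) ξ =
        (α₁ * (φ ξ) ^ 6 + α₂ * (φ ξ) ^ 4 + α₃) / (φ ξ) ^ 3 := by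
  intro ξ hξ
  set c := -2 * α₂ / (3 * α₁)
  have hφ' : φ = fun y => √(c + 2 / α₁ / y ^ 2) := funext fun y => by rw [hφ, div_mul_eq_div_div]
  have hc : 0 < c := div_pos (by linarith) (by positivity)
  have hpos : 0 < c + 2 / α₁ / ξ ^ 2 := by positivity
  have hφξ : √(c + 2 / α₁ / ξ ^ 2) = φ ξ := by rw [hφ']
  have hφ_sq : φ ξ ^ 2 = c + 2 / α₁ / ξ ^ 2 := by rw [← hφξ]; exact sq_sqrt hpos.le
  have hφ_deriv2 := deriv_deriv_sqrt_const_add_div_sq hξ.ne' hpos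
  rw [← hφ', hφξ] at hφ_deriv2
  rw [hφ_deriv2, show φ ξ ^ 6 = (φ ξ ^ 2) ^ 3 by ring, show φ ξ ^ 4 = (φ ξ ^ 2) ^ 2 by ring, hφ_sq,
    cubic_eq_mul_sq_mul (c := c) h1.ne' rfl h3]
  congr 1
  field_simp
  ring
end

section
/- Let α₁ > 0 and 0 < r₂' < r₃' be real constants, σ = √(2α₁(r₃' - r₂')). Then ψ(ξ) = r₂' + (r₃' - r₂')·(1 + e^{σξ})²/(1 - e^{σξ})² satisfies (ψ'(ξ))² = 2α₁(ψ(ξ) - r₂')(ψ(ξ) - r₃')² for all ξ > 0. -/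
/-!
With `w ξ = (1 + e^{σξ}) / (1 - e^{σξ})` we have `ψ = r₂' + (r₃' - r₂') w²`, and `w` solves the
Riccati equation `w' = (σ/2)(w² - 1)`. Hence `ψ' = (r₃' - r₂') σ w (w² - 1)`, while
`ψ - r₂' = (r₃' - r₂') w²` and `ψ - r₃' = (r₃' - r₂')(w² - 1)`; squaring, the identity reduces to
`σ² = 2α₁(r₃' - r₂')`.
-/

open Real

theorem hasDerivAt_one_add_exp_div_one_sub_exp {σ ξ : ℝ} (h : σ * ξ ≠ 0) :
    HasDerivAt (fun x => (1 + exp (σ * x)) / (1 - exp (σ * x)))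
      (σ / 2 * (((1 + exp (σ * ξ)) / (1 - exp (σ * ξ))) ^ 2 - 1)) ξ := by
  have hne : 1 - exp (σ * ξ) ≠ 0 :=
    sub_ne_zero.2 fun h' => h ((Real.exp_eq_one_iff _).1 h'.symm)
  have hexp : HasDerivAt (fun x => exp (σ * x)) (exp (σ * ξ) * σ) ξ := by
    simpa using ((hasDerivAt_id ξ).const_mul σ).exp
  refine ((hexp.const_add 1).div (hexp.const_sub 1) hne).congr_deriv ?_
  field_simp
  ring

theorem sq_deriv_eq_of_hasDerivAt_riccati {w : ℝ → ℝ} {a c σ k ξ : ℝ}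
    (hw : HasDerivAt w (σ / 2 * (w ξ ^ 2 - 1)) ξ) (hσ : σ ^ 2 = k * c) :
    deriv (fun x => a + c * w x ^ 2) ξ ^ 2 =
      k * (a + c * w ξ ^ 2 - a) * (a + c * w ξ ^ 2 - (a + c)) ^ 2 := by
  rw [(((hw.fun_pow 2).const_mul c).const_add a).deriv]
  linear_combination (c ^ 2 * w ξ ^ 2 * (w ξ ^ 2 - 1) ^ 2) * hσ

theorem stmt_18_general (α₁ r₂' r₃' σ : ℝ) (h1 : α₁ > 0) (h23 : r₂' < r₃')
    (hσ : σ = Real.sqrt (2 * α₁ * (r₃' - r₂')))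
    (ψ : ℝ → ℝ)
    (hψ : ∀ ξ, ψ ξ = r₂' + (r₃' - r₂') *
      (1 + Real.exp (σ * ξ)) ^ 2 / (1 - Real.exp (σ * ξ)) ^ 2) :
    ∀ ξ : ℝ, 0 < ξ →
      (deriv ψ ξ) ^ 2 = 2 * α₁ * (ψ ξ - r₂') * (ψ ξ - r₃') ^ 2 := by
  intro ξ hξ
  have hc : 0 < r₃' - r₂' := sub_pos.2 h23
  have hσ_pos : 0 < σ := hσ ▸ Real.sqrt_pos.2 (by positivity)
  have hσ_sq : σ ^ 2 = 2 * α₁ * (r₃' - r₂') := by rw [hσ, Real.sq_sqrt (by positivity)]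
  have hψ_eq : ψ = fun x => r₂' + (r₃' - r₂') * ((1 + exp (σ * x)) / (1 - exp (σ * x))) ^ 2 := by
    funext x
    rw [hψ, div_pow, mul_div_assoc]
  have key := sq_deriv_eq_of_hasDerivAt_riccati (a := r₂')
    (hasDerivAt_one_add_exp_div_one_sub_exp (mul_ne_zero hσ_pos.ne' hξ.ne')) hσ_sq
  rw [hψ_eq]
  beta_reduce
  rwa [add_sub_cancel] at key

theorem stmt_18 (α₁ r₂' r₃' σ : ℝ) (h1 : α₁ > 0) (h2 : 0 < r₂') (h23 : r₂' < r₃')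
    (hσ : σ = Real.sqrt (2 * α₁ * (r₃' - r₂')))
    (ψ : ℝ → ℝ)
    (hψ : ∀ ξ, ψ ξ = r₂' + (r₃' - r₂') *
      (1 + Real.exp (σ * ξ)) ^ 2 / (1 - Real.exp (σ * ξ)) ^ 2) :
    ∀ ξ : ℝ, 0 < ξ →
      (deriv ψ ξ) ^ 2 = 2 * α₁ * (ψ ξ - r₂') * (ψ ξ - r₃') ^ 2 :=
  stmt_18_general α₁ r₂' r₃' σ h1 h23 hσ ψ hψ
end

section
/- Let 0 < r₇' < r₈' and α₁ > 0, and set ν = √(α₁(r₈' - r₇')/2). Let φ(ξ) = √(r₈' + (r₈' - r₇')·cot²(νξ)). Then ψ(ξ) = φ(ξ)² = r₈' + (r₈' - r₇')cot²(νξ) satisfies (ψ'(ξ))² = 2α₁(ψ(ξ) - r₇')²(ψ(ξ) - r₈') for all ξ ∈ (0, π/ν). -/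
theorem stmt_19 (α₁ r₇' r₈' ν : ℝ) (h1 : α₁ > 0) (h7 : 0 < r₇') (h78 : r₇' < r₈')
    (hν : ν = Real.sqrt (α₁ * (r₈' - r₇') / 2))
    (ψ : ℝ → ℝ)
    (hψ : ∀ ξ, ψ ξ = r₈' + (r₈' - r₇') *
      (Real.cos (ν * ξ) / Real.sin (ν * ξ)) ^ 2) :
    ∀ ξ : ℝ, 0 < ξ → ξ < Real.pi / ν →
      (deriv ψ ξ) ^ 2 = 2 * α₁ * (ψ ξ - r₇') ^ 2 * (ψ ξ - r₈') := by
  have hcpos : (0:ℝ) < α₁ * (r₈' - r₇') / 2 := by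
    have : 0 < r₈' - r₇' := by linarith
    positivity
  have hνpos : 0 < ν := by rw [hν]; exact Real.sqrt_pos.mpr hcpos
  have hν2 : ν ^ 2 = α₁ * (r₈' - r₇') / 2 := by
    rw [hν, Real.sq_sqrt hcpos.le]
  intro ξ hξ1 hξ2
  have hspos : 0 < Real.sin (ν * ξ) := by
    apply Real.sin_pos_of_pos_of_lt_pi
    · positivity
    · calc ν * ξ < ν * (Real.pi / ν) := by
            exact (mul_lt_mul_iff_right₀ hνpos).mpr hξ2
        _ = Real.pi := by field_simp
  set s := Real.sin (ν * ξ) with hs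
  set co := Real.cos (ν * ξ) with hco
  have hsne : s ≠ 0 := ne_of_gt hspos
  have hmul : HasDerivAt (fun x : ℝ => ν * x) ν ξ := by
    simpa using (hasDerivAt_id ξ).const_mul ν
  have hcd : HasDerivAt (fun x => Real.cos (ν * x)) (-s * ν) ξ :=
    (Real.hasDerivAt_cos (ν * ξ)).comp ξ hmul
  have hsd : HasDerivAt (fun x => Real.sin (ν * x)) (co * ν) ξ :=
    (Real.hasDerivAt_sin (ν * ξ)).comp ξ hmul
  have hdiv : HasDerivAt (fun x => Real.cos (ν * x) / Real.sin (ν * x))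
      ((-s * ν * s - co * (co * ν)) / s ^ 2) ξ := hcd.div hsd hsne
  have hpow := hdiv.pow 2
  have hψd : HasDerivAt ψ
      ((r₈' - r₇') * ((2 : ℕ) * (co / s) ^ (2 - 1) * ((-s * ν * s - co * (co * ν)) / s ^ 2))) ξ := by
    have := (hpow.const_mul (r₈' - r₇')).const_add r₈'
    have hfun : ψ = fun x => r₈' + (r₈' - r₇') * (Real.cos (ν * x) / Real.sin (ν * x)) ^ 2 :=
      funext hψ
    rw [hfun]
    exact this
  have hpyth : s ^ 2 + co ^ 2 = 1 := Real.sin_sq_add_cos_sq (ν * ξ)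
  have hα : α₁ * (r₈' - r₇') = 2 * ν ^ 2 := by rw [hν2]; ring
  have hd : deriv ψ ξ = (-2) * (r₈' - r₇') * ν * co / s ^ 3 := by
    rw [hψd.deriv]
    field_simp
    norm_num
    field_simp
    linear_combination (-(r₈' - r₇') * co) * hpyth
  have ha' : ψ ξ - r₇' = (r₈' - r₇') / s ^ 2 := by
    rw [hψ]
    simp only [← hs, ← hco]
    field_simp
    linear_combination (r₈' - r₇') * hpyth
  have hb' : ψ ξ - r₈' = (r₈' - r₇') * co ^ 2 / s ^ 2 := by
    rw [hψ]; ring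
  rw [hd, ha', hb']
  field_simp
  linear_combination (-(r₈' - r₇') ^ 2 * co ^ 2) * hα
end
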